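/- On the group Z/(p^s)Z (p prime, s ≥ 2) with fixed generator g, define d(g₁,g₂) = 1/2^{k−1} if g₁ − g₂ ∈ p^{k−1}·Z/(p^s)Z but g₁ − g₂ ∉ p^k·Z/(p^s)Z for k ≤ s−1, and d(g₁,g₂) = (1/2^{s−1})·l_Lee((g₁−g₂)/p^{s−1}) if g₁ − g₂ ∈ p^{s−1}·Z/(p^s)Z (identifying p^{s−1}·Z/(p^s)Z with Z/pZ via p^{s−1}g ↦ 1). Then d is a bi-invariant metric on Z/(p^s)Z. -/

import Mathlib

open Classical in
/-- The norm on `ZMod (p^s)` combining an ultrametric between the cosets of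
`p^{s-1}·ZMod(p^s)` with a scaled Lee norm on that subgroup. -/
noncomputable def lMix (p s : ℕ) (x : ZMod (p ^ s)) : ℝ :=
  if x = 0 then 0
  else if p ^ (s - 1) ∣ x.val then
    (1 / 2 ^ (s - 1)) *
      (2 * ((min (x.val / p ^ (s - 1)) (p - x.val / p ^ (s - 1)) : ℕ) : ℝ) / ((p : ℝ) - 1))
  else (1 / 2 : ℝ) ^ padicValNat p x.val

private lemma padic_eq_iff {p : ℕ} (hp : p.Prime) {n v : ℕ} (hn : n ≠ 0) :
    padicValNat p n = v ↔ p ^ v ∣ n ∧ ¬ p ^ (v + 1) ∣ n := by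
  rw [← Nat.factorization_def n hp, Nat.Prime.pow_dvd_iff_le_factorization hp hn,
    Nat.Prime.pow_dvd_iff_le_factorization hp hn]
  omega

private lemma padic_lt_of_not_dvd {p k : ℕ} (hp : p.Prime) {n : ℕ} (hn : n ≠ 0)
    (h : ¬ p ^ k ∣ n) : padicValNat p n < k := by
  by_contra hc
  exact h (dvd_trans (pow_dvd_pow p (not_lt.mp hc)) (pow_padicValNat_dvd))

private lemma le_padic_of_dvd {p k : ℕ} (hp : p.Prime) {n : ℕ} (hn : n ≠ 0)
    (h : p ^ k ∣ n) : k ≤ padicValNat p n := by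
  rw [← Nat.factorization_def n hp]
  exact (Nat.Prime.pow_dvd_iff_le_factorization hp hn).mp h

private lemma lMix_of_dvd {p s : ℕ} {x : ZMod (p ^ s)} (hx : x ≠ 0) (hd : p ^ (s - 1) ∣ x.val) :
    lMix p s x = (1 / 2 ^ (s - 1)) *
      (2 * ((min (x.val / p ^ (s - 1)) (p - x.val / p ^ (s - 1)) : ℕ) : ℝ) / ((p : ℝ) - 1)) := by
  simp only [lMix, if_neg hx, if_pos hd]

private lemma lMix_of_not_dvd {p s : ℕ} {x : ZMod (p ^ s)} (hx : x ≠ 0)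
    (hd : ¬ p ^ (s - 1) ∣ x.val) :
    lMix p s x = (1 / 2 : ℝ) ^ padicValNat p x.val := by
  simp only [lMix, if_neg hx, if_neg hd]

private lemma caseA_bounds {p s : ℕ} (hp : p.Prime) {x : ZMod (p ^ s)}
    (hx : x ≠ 0) (hd : p ^ (s - 1) ∣ x.val) :
    1 ≤ x.val / p ^ (s - 1) ∧ x.val / p ^ (s - 1) < p ∧
      p ^ (s - 1) * (x.val / p ^ (s - 1)) = x.val := by
  haveI : NeZero (p ^ s) := ⟨pow_ne_zero _ hp.ne_zero⟩
  have hq : 0 < p ^ (s - 1) := pow_pos hp.pos _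
  have hmul : p ^ (s - 1) * (x.val / p ^ (s - 1)) = x.val := Nat.mul_div_cancel' hd
  have hvne : x.val ≠ 0 := by
    simpa [ZMod.val_eq_zero] using hx
  have hlt : x.val < p ^ s := x.val_lt
  have h1lt : 1 < p ^ s := by omega
  have hs1 : 1 ≤ s := by
    by_contra h
    push_neg at h
    have hs0 : s = 0 := by omega
    rw [hs0, pow_zero] at h1lt
    omega
  have hps : p ^ s = p ^ (s - 1) * p := by
    rw [← pow_succ]
    congr 1
    omega
  constructor
  · rcases Nat.eq_zero_or_pos (x.val / p ^ (s - 1)) with h | h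
    · rw [h, Nat.mul_zero] at hmul; exact absurd hmul.symm hvne
    · exact h
  constructor
  · have : p ^ (s - 1) * (x.val / p ^ (s - 1)) < p ^ (s - 1) * p := by
      rw [hmul, ← hps]; exact hlt
    exact lt_of_mul_lt_mul_left this (le_of_lt hq)
  · exact hmul

private lemma lMix_nonneg (p s : ℕ) (hp : p.Prime) (x : ZMod (p ^ s)) : 0 ≤ lMix p s x := by
  have hp1 : (1 : ℝ) ≤ p := by exact_mod_cast hp.one_lt.le
  unfold lMix
  split_ifs
  · exact le_refl _
  · exact mul_nonneg (by positivity) (div_nonneg (by positivity) (by linarith))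
  · positivity

private lemma lMix_eq_zero_iff {p s : ℕ} (hp : p.Prime) {x : ZMod (p ^ s)} :
    lMix p s x = 0 ↔ x = 0 := by
  have hp1 : (1 : ℝ) < p := by exact_mod_cast hp.one_lt
  constructor
  · intro h
    by_contra hx
    by_cases hd : p ^ (s - 1) ∣ x.val
    · obtain ⟨h1, h2, -⟩ := caseA_bounds hp hx hd
      rw [lMix_of_dvd hx hd] at h
      have hm : (1 : ℝ) ≤ ((min (x.val / p ^ (s - 1)) (p - x.val / p ^ (s - 1)) : ℕ) : ℝ) := by
        have : 1 ≤ min (x.val / p ^ (s - 1)) (p - x.val / p ^ (s - 1)) := by omega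
        exact_mod_cast this
      have : 0 < (1 / 2 ^ (s - 1) : ℝ) *
          (2 * ((min (x.val / p ^ (s - 1)) (p - x.val / p ^ (s - 1)) : ℕ) : ℝ) / ((p : ℝ) - 1)) := by
        apply mul_pos (by positivity)
        apply div_pos (by linarith) (by linarith)
      linarith
    · rw [lMix_of_not_dvd hx hd] at h
      have : (0 : ℝ) < (1 / 2 : ℝ) ^ padicValNat p x.val := by positivity
      linarith
  · rintro rfl
    simp [lMix]

private lemma caseA_le {p s : ℕ} (hp : p.Prime) (hs : 2 ≤ s) {x : ZMod (p ^ s)}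
    (hx : x ≠ 0) (hd : p ^ (s - 1) ∣ x.val) :
    lMix p s x ≤ (1 / 2 : ℝ) ^ (s - 2) := by
  obtain ⟨h1, h2, -⟩ := caseA_bounds hp hx hd
  have hp1 : (1 : ℝ) < p := by exact_mod_cast hp.one_lt
  rw [lMix_of_dvd hx hd]
  have hmle : ((min (x.val / p ^ (s - 1)) (p - x.val / p ^ (s - 1)) : ℕ) : ℝ) ≤ (p : ℝ) - 1 := by
    have h3 : min (x.val / p ^ (s - 1)) (p - x.val / p ^ (s - 1)) ≤ p - 1 := by omega
    have h4 : ((p - 1 : ℕ) : ℝ) = (p : ℝ) - 1 := by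
      have : 1 ≤ p := hp.one_lt.le
      push_cast [this]; ring
    calc ((min (x.val / p ^ (s - 1)) (p - x.val / p ^ (s - 1)) : ℕ) : ℝ) ≤ ((p - 1 : ℕ) : ℝ) := by
          exact_mod_cast h3
      _ = (p : ℝ) - 1 := h4
  have key : (1 / 2 ^ (s - 1) : ℝ) *
      (2 * ((min (x.val / p ^ (s - 1)) (p - x.val / p ^ (s - 1)) : ℕ) : ℝ) / ((p : ℝ) - 1))
      ≤ (1 / 2 ^ (s - 1) : ℝ) * 2 := by
    have h5 : (2 * ((min (x.val / p ^ (s - 1)) (p - x.val / p ^ (s - 1)) : ℕ) : ℝ) / ((p : ℝ) - 1))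
        ≤ 2 := by
      rw [div_le_iff₀ (by linarith)]
      linarith
    have h6 : (0 : ℝ) ≤ 1 / 2 ^ (s - 1) := by positivity
    calc _ ≤ (1 / 2 ^ (s - 1) : ℝ) * 2 := by
          exact mul_le_mul_of_nonneg_left h5 h6
      _ = _ := rfl
  refine le_trans key (le_of_eq ?_)
  have hs1 : s - 1 = (s - 2) + 1 := by omega
  rw [hs1, pow_succ, one_div_pow]
  field_simp

private lemma half_pow_le {a b : ℕ} (h : b ≤ a) : (1 / 2 : ℝ) ^ a ≤ (1 / 2 : ℝ) ^ b :=
  pow_le_pow_of_le_one (by norm_num) (by norm_num) h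

private lemma lMix_neg {p s : ℕ} (hp : p.Prime) (x : ZMod (p ^ s)) :
    lMix p s (-x) = lMix p s x := by
  haveI : NeZero (p ^ s) := ⟨pow_ne_zero _ hp.ne_zero⟩
  by_cases hx : x = 0
  · simp [hx]
  have hnx : -x ≠ 0 := by simpa [neg_eq_zero] using hx
  have hval : (-x).val = p ^ s - x.val := by rw [ZMod.neg_val, if_neg hx]
  have hvne : x.val ≠ 0 := fun h => hx ((ZMod.val_eq_zero x).mp h)
  have hlt : x.val < p ^ s := x.val_lt
  have h1lt : 1 < p ^ s := by omega
  have hs1 : 1 ≤ s := by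
    by_contra h
    push_neg at h
    have hs0 : s = 0 := by omega
    rw [hs0, pow_zero] at h1lt
    omega
  have hps : p ^ s = p ^ (s - 1) * p := by rw [← pow_succ]; congr 1; omega
  have hqps : p ^ (s - 1) ∣ p ^ s := pow_dvd_pow p (by omega)
  by_cases hd : p ^ (s - 1) ∣ x.val
  · obtain ⟨h1, h2, hm⟩ := caseA_bounds hp hx hd
    have hq : 0 < p ^ (s - 1) := pow_pos hp.pos _
    have hdn : p ^ (s - 1) ∣ (-x).val := by
      rw [hval]; exact Nat.dvd_sub hqps hd
    rw [lMix_of_dvd hx hd, lMix_of_dvd hnx hdn]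
    set m := x.val / p ^ (s - 1) with hm_def
    have hnval : (-x).val = p ^ (s - 1) * (p - m) := by
      have hsub : p ^ (s - 1) * (p - m) = p ^ (s - 1) * p - p ^ (s - 1) * m := Nat.mul_sub ..
      rw [hval, hsub, ← hps, hm]
    have hdiv : (-x).val / p ^ (s - 1) = p - m := by
      rw [hnval, Nat.mul_div_cancel_left _ hq]
    rw [hdiv]
    have hmin : min (p - m) (p - (p - m)) = min m (p - m) := by omega
    rw [hmin]
  · have hdn : ¬ p ^ (s - 1) ∣ (-x).val := by
      intro h
      apply hd
      have hxe : x.val = p ^ s - (-x).val := by rw [hval]; omega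
      rw [hxe]
      exact Nat.dvd_sub hqps h
    rw [lMix_of_not_dvd hx hd, lMix_of_not_dvd hnx hdn]
    congr 1
    have hnvne : (-x).val ≠ 0 := fun h => hnx ((ZMod.val_eq_zero _).mp h)
    have h0 := (padic_eq_iff hp hvne).mp (rfl : padicValNat p x.val = padicValNat p x.val)
    have hvlt : padicValNat p x.val < s - 1 := padic_lt_of_not_dvd hp hvne hd
    have hdvs : p ^ padicValNat p x.val ∣ p ^ s := pow_dvd_pow p (by omega)
    have hdvs1 : p ^ (padicValNat p x.val + 1) ∣ p ^ s := pow_dvd_pow p (by omega)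
    apply (padic_eq_iff hp hnvne).mpr
    constructor
    · rw [hval]; exact Nat.dvd_sub hdvs h0.1
    · intro h
      apply h0.2
      have hxe : x.val = p ^ s - (-x).val := by rw [hval]; omega
      have hgoal : p ^ (padicValNat p x.val + 1) ∣ p ^ s - (-x).val := Nat.dvd_sub hdvs1 h
      rwa [← hxe] at hgoal

private lemma lMix_add_le {p s : ℕ} (hp : p.Prime) (hs : 2 ≤ s) (x y : ZMod (p ^ s)) :
    lMix p s (x + y) ≤ lMix p s x + lMix p s y := by
  haveI : NeZero (p ^ s) := ⟨pow_ne_zero _ hp.ne_zero⟩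
  have h0 : lMix p s (0 : ZMod (p ^ s)) = 0 := by simp [lMix]
  by_cases hx : x = 0
  · rw [hx, zero_add, h0, zero_add]
  by_cases hy : y = 0
  · rw [hy, add_zero, h0, add_zero]
  by_cases hz : x + y = 0
  · rw [hz, h0]
    exact add_nonneg (lMix_nonneg p s hp x) (lMix_nonneg p s hp y)
  have hxv : x.val ≠ 0 := fun h => hx ((ZMod.val_eq_zero _).mp h)
  have hyv : y.val ≠ 0 := fun h => hy ((ZMod.val_eq_zero _).mp h)
  have hzv : (x + y).val ≠ 0 := fun h => hz ((ZMod.val_eq_zero _).mp h)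
  have hvadd : (x + y).val = (x.val + y.val) % p ^ s := ZMod.val_add x y
  have hs1 : 1 ≤ s := by omega
  have hps : p ^ s = p ^ (s - 1) * p := by rw [← pow_succ]; congr 1; omega
  have hqps : p ^ (s - 1) ∣ p ^ s := pow_dvd_pow p (by omega)
  have hp1 : (1 : ℝ) < p := by exact_mod_cast hp.one_lt
  have hc : (0 : ℝ) < (p : ℝ) - 1 := by linarith
  by_cases hdx : p ^ (s - 1) ∣ x.val <;> by_cases hdy : p ^ (s - 1) ∣ y.val
  · -- both in subgroup: Lee norm triangle
    have hdz : p ^ (s - 1) ∣ (x + y).val := by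
      rw [hvadd]
      exact (Nat.dvd_mod_iff hqps).mpr (Nat.dvd_add hdx hdy)
    obtain ⟨hx1, hx2, hxm⟩ := caseA_bounds hp hx hdx
    obtain ⟨hy1, hy2, hym⟩ := caseA_bounds hp hy hdy
    obtain ⟨hz1, hz2, hzm⟩ := caseA_bounds hp hz hdz
    rw [lMix_of_dvd hx hdx, lMix_of_dvd hy hdy, lMix_of_dvd hz hdz]
    set m := x.val / p ^ (s - 1) with hm_def
    set m' := y.val / p ^ (s - 1) with hm'_def
    set m'' := (x + y).val / p ^ (s - 1) with hm''_def
    have hq : 0 < p ^ (s - 1) := pow_pos hp.pos _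
    have hmod : (x + y).val = p ^ (s - 1) * ((m + m') % p) := by
      rw [hvadd, ← hxm, ← hym, hps, ← Nat.mul_add, Nat.mul_mod_mul_left]
    have hm''2 : m'' = (m + m') % p := by
      rw [hm''_def, hmod, Nat.mul_div_cancel_left _ hq]
    have hdisj : m'' = m + m' ∨ m'' + p = m + m' := by
      rcases Nat.lt_or_ge (m + m') p with h | h
      · left; rw [hm''2, Nat.mod_eq_of_lt h]
      · right
        have hlt2 : m + m' - p < p := by omega
        rw [hm''2, Nat.mod_eq_sub_mod h, Nat.mod_eq_of_lt hlt2]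
        omega
    have hkey : min m'' (p - m'') ≤ min m (p - m) + min m' (p - m') := by omega
    have hcast : ((min m'' (p - m'') : ℕ) : ℝ) ≤
        ((min m (p - m) : ℕ) : ℝ) + ((min m' (p - m') : ℕ) : ℝ) := by exact_mod_cast hkey
    have hrhs : (1 / 2 ^ (s - 1) : ℝ) * (2 * ((min m (p - m) : ℕ) : ℝ) / ((p : ℝ) - 1)) +
        (1 / 2 ^ (s - 1) : ℝ) * (2 * ((min m' (p - m') : ℕ) : ℝ) / ((p : ℝ) - 1)) =
        (1 / 2 ^ (s - 1) : ℝ) *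
          (2 * (((min m (p - m) : ℕ) : ℝ) + ((min m' (p - m') : ℕ) : ℝ)) / ((p : ℝ) - 1)) := by
      ring
    rw [hrhs]
    gcongr
  · -- x in subgroup, y not
    have hdz : ¬ p ^ (s - 1) ∣ (x + y).val := by
      intro h
      apply hdy
      have h2 : p ^ (s - 1) ∣ x.val + y.val := (Nat.dvd_mod_iff hqps).mp (hvadd ▸ h)
      exact (Nat.dvd_add_right hdx).mp h2
    have hb : padicValNat p y.val < s - 1 := padic_lt_of_not_dvd hp hyv hdy
    have hdvz : p ^ padicValNat p y.val ∣ (x + y).val := by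
      rw [hvadd]
      exact (Nat.dvd_mod_iff (pow_dvd_pow p (by omega))).mpr
        (Nat.dvd_add (dvd_trans (pow_dvd_pow p (by omega)) hdx) pow_padicValNat_dvd)
    have hle : padicValNat p y.val ≤ padicValNat p (x + y).val := le_padic_of_dvd hp hzv hdvz
    rw [lMix_of_not_dvd hz hdz, lMix_of_not_dvd hy hdy]
    have hh := half_pow_le hle
    have hxnn := lMix_nonneg p s hp x
    linarith
  · -- y in subgroup, x not
    have hdz : ¬ p ^ (s - 1) ∣ (x + y).val := by
      intro h
      apply hdx
      have h2 : p ^ (s - 1) ∣ x.val + y.val := (Nat.dvd_mod_iff hqps).mp (hvadd ▸ h)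
      exact (Nat.dvd_add_left hdy).mp h2
    have hb : padicValNat p x.val < s - 1 := padic_lt_of_not_dvd hp hxv hdx
    have hdvz : p ^ padicValNat p x.val ∣ (x + y).val := by
      rw [hvadd]
      exact (Nat.dvd_mod_iff (pow_dvd_pow p (by omega))).mpr
        (Nat.dvd_add pow_padicValNat_dvd (dvd_trans (pow_dvd_pow p (by omega)) hdy))
    have hle : padicValNat p x.val ≤ padicValNat p (x + y).val := le_padic_of_dvd hp hzv hdvz
    rw [lMix_of_not_dvd hz hdz, lMix_of_not_dvd hx hdx]
    have hh := half_pow_le hle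
    have hynn := lMix_nonneg p s hp y
    linarith
  · -- neither in subgroup
    have ha : padicValNat p x.val < s - 1 := padic_lt_of_not_dvd hp hxv hdx
    have hb : padicValNat p y.val < s - 1 := padic_lt_of_not_dvd hp hyv hdy
    set a := padicValNat p x.val with ha_def
    set b := padicValNat p y.val with hb_def
    have hmindvd : p ^ min a b ∣ (x + y).val := by
      rw [hvadd]
      exact (Nat.dvd_mod_iff (pow_dvd_pow p (by omega))).mpr
        (Nat.dvd_add (dvd_trans (pow_dvd_pow p (min_le_left a b)) pow_padicValNat_dvd)
          (dvd_trans (pow_dvd_pow p (min_le_right a b)) pow_padicValNat_dvd))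
    have hmax : (1 / 2 : ℝ) ^ min a b ≤ (1 / 2 : ℝ) ^ a + (1 / 2 : ℝ) ^ b := by
      rcases le_total a b with h | h
      · rw [min_eq_left h]
        have : (0 : ℝ) < (1 / 2 : ℝ) ^ b := by positivity
        linarith
      · rw [min_eq_right h]
        have : (0 : ℝ) < (1 / 2 : ℝ) ^ a := by positivity
        linarith
    rw [lMix_of_not_dvd hx hdx, lMix_of_not_dvd hy hdy]
    by_cases hdz : p ^ (s - 1) ∣ (x + y).val
    · have h1 := caseA_le hp hs hz hdz
      have h2 : (1 / 2 : ℝ) ^ (s - 2) ≤ (1 / 2 : ℝ) ^ min a b := half_pow_le (by omega)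
      linarith
    · rw [lMix_of_not_dvd hz hdz]
      have hle : min a b ≤ padicValNat p (x + y).val := le_padic_of_dvd hp hzv hmindvd
      have hh := half_pow_le hle
      linarith

/-- For `p` prime and `s ≥ 2`, the function `d(g₁,g₂) = lMix (g₁ - g₂)` is a
bi-invariant (i.e. translation invariant) metric on `ZMod (p^s)`. -/
theorem mixed_lee_ultrametric_is_metric (p s : ℕ) (hp : p.Prime) (hs : 2 ≤ s) :
    let d : ZMod (p ^ s) → ZMod (p ^ s) → ℝ := fun g₁ g₂ => lMix p s (g₁ - g₂)
    (∀ x y : ZMod (p ^ s), d x y = 0 ↔ x = y) ∧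
    (∀ x y : ZMod (p ^ s), d x y = d y x) ∧
    (∀ x y z : ZMod (p ^ s), d x z ≤ d x y + d y z) ∧
    (∀ a x y : ZMod (p ^ s), d (x + a) (y + a) = d x y) := by
  intro d
  refine ⟨fun x y => ?_, fun x y => ?_, fun x y z => ?_, fun a x y => ?_⟩
  · show lMix p s (x - y) = 0 ↔ x = y
    rw [lMix_eq_zero_iff hp, sub_eq_zero]
  · show lMix p s (x - y) = lMix p s (y - x)
    have h : y - x = -(x - y) := by ring
    rw [h, lMix_neg hp]
  · show lMix p s (x - z) ≤ lMix p s (x - y) + lMix p s (y - z)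
    have h : x - z = (x - y) + (y - z) := by ring
    rw [h]
    exact lMix_add_le hp hs _ _
  · show lMix p s ((x + a) - (y + a)) = lMix p s (x - y)
    congr 1
    ring
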